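/- Let (T,*,[[·,·,·]],b) be a quadratic left Bol algebra over ℝ and let l(u)(v) := u*v, R(u,v)(w) := [[w,u,v]], L(u,v)(w) := [[u,v,w]] be the maps of the adjoint representation. On the dual space T*, define l'(x)(f) := -f∘l(x), R'(x,y)(f) := f∘R(y,x), and L'(x,y)(f) := -f∘L(x,y) for f ∈ T*. Then (T*, l', R', L') is a representation of T, i.e. (ρ,θ,D_θ) = (l',R',L') satisfies (R1), (R21), (R22), (R31), (R32), (R33); it is called the coadjoint representation of (T,b). -/

import Mathlib

/-- A left Bol algebra over ℝ: a real vector space with a bilinear operation `mul`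
and a trilinear operation `tri` satisfying (T01), (T02), (T1), (T2) and (T3). -/
structure LeftBolAlgebra (T : Type*) [AddCommGroup T] [Module ℝ T] where
  mul : T →ₗ[ℝ] T →ₗ[ℝ] T
  tri : T →ₗ[ℝ] T →ₗ[ℝ] T →ₗ[ℝ] T
  mul_anticomm : ∀ x y : T, mul x y = - mul y x
  tri_skew : ∀ x y z : T, tri x y z = - tri y x z
  tri_cyclic : ∀ x y z : T, tri x y z + tri y z x + tri z x y = 0
  tri_leibniz : ∀ u v x y z : T,
    tri u v (tri x y z) = tri (tri u v x) y z + tri x (tri u v y) z + tri x y (tri u v z)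
  bol : ∀ u v x y : T, tri u v (mul x y) =
    mul (tri u v x) y + mul x (tri u v y) + tri x y (mul u v) - mul (mul x y) (mul u v)

variable {T : Type*} [AddCommGroup T] [Module ℝ T]

/-- The adjoint map R(u,v) : w ↦ [[w,u,v]]. -/
def LeftBolAlgebra.Rmap (A : LeftBolAlgebra T) (u v : T) : T →ₗ[ℝ] T where
  toFun w := A.tri w u v
  map_add' a c := by simp
  map_smul' r a := by simp

/-- The coadjoint map l'(x) : T* → T*, l'(x)(f) = -f ∘ l(x), where l(x)(v) = x*v. -/
def LeftBolAlgebra.coadL (A : LeftBolAlgebra T) (x : T) :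
    Module.End ℝ (Module.Dual ℝ T) :=
  - (A.mul x).dualMap

/-- The coadjoint map R'(x,y) : T* → T*, R'(x,y)(f) = f ∘ R(y,x). -/
def LeftBolAlgebra.coadTheta (A : LeftBolAlgebra T) (x y : T) :
    Module.End ℝ (Module.Dual ℝ T) :=
  (A.Rmap y x).dualMap

/-- The coadjoint map L'(x,y) : T* → T*, L'(x,y)(f) = -f ∘ L(x,y), where
L(x,y)(w) = [[x,y,w]]. -/
def LeftBolAlgebra.coadD (A : LeftBolAlgebra T) (x y : T) :
    Module.End ℝ (Module.Dual ℝ T) :=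
  - (A.tri x y).dualMap

/-!
The maps l(x) = x * ·, R(x,y) = [[·,x,y]] and L(x,y) = [[x,y,·]] satisfy (R1)–(R33) on T itself:
each identity is one of the axioms (T1)–(T3) read as an equation between operators. Invariance of b
says that these maps have b-adjoints -l(x), R(y,x) and -L(x,y), and the coadjoint maps l', R', L'
are precisely the transposes of these adjoints. Taking the adjoint and then the transpose reverses
the order of composition twice, so the operator identities on T pass to T*; no identification of T
with T* is needed, only that adjoints are unique, which is where nondegeneracy of b enters.
-/

namespace LinearMap

section Semiring

variable {R M₁ M₂ : Type*} [CommSemiring R] [AddCommMonoid M₁] [Module R M₁]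
  [AddCommMonoid M₂] [Module R M₂]

theorem dualMap_zero : (0 : M₁ →ₗ[R] M₂).dualMap = 0 :=
  map_zero Module.Dual.transpose

theorem dualMap_add (f g : M₁ →ₗ[R] M₂) : (f + g).dualMap = f.dualMap + g.dualMap :=
  map_add Module.Dual.transpose f g

theorem dualMap_mul (f g : Module.End R M₁) : (f * g).dualMap = g.dualMap * f.dualMap :=
  rfl

-- Unlike `IsAdjointPair.add` and `IsAdjointPair.sub`, which produce `⇑f + ⇑f'`, the primed
-- versions keep the endomorphism `f + f'` visible to unification.
theorem IsAdjointPair.add' {B : LinearMap.BilinForm R M₁} {f f' g g' : Module.End R M₁}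
    (h : IsAdjointPair B B f g) (h' : IsAdjointPair B B f' g') :
    IsAdjointPair B B ⇑(f + f') ⇑(g + g') :=
  h.add h'

end Semiring

section Ring

variable {R M₁ M₂ : Type*} [CommRing R] [AddCommGroup M₁] [Module R M₁]
  [AddCommGroup M₂] [Module R M₂]

theorem dualMap_sub (f g : M₁ →ₗ[R] M₂) : (f - g).dualMap = f.dualMap - g.dualMap :=
  map_sub Module.Dual.transpose f g

theorem dualMap_neg (f : M₁ →ₗ[R] M₂) : (-f).dualMap = -f.dualMap :=
  map_neg Module.Dual.transpose f

namespace IsAdjointPair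

variable {B : LinearMap.BilinForm R M₁} {f f' g g' : Module.End R M₁}

theorem sub' (h : IsAdjointPair B B f g) (h' : IsAdjointPair B B f' g') :
    IsAdjointPair B B ⇑(f - f') ⇑(g - g') :=
  h.sub h'

theorem right_eq_of_left_eq (hB : B.SeparatingRight) (h : IsAdjointPair B B f g)
    (h' : IsAdjointPair B B f' g') (hf : f = f') : g = g' := by
  ext y
  refine sub_eq_zero.1 (hB _ fun x => ?_)
  rw [map_sub, ← h, ← h', hf, sub_self]

end IsAdjointPair

end Ring

end LinearMap

namespace LeftBolAlgebra

variable (A : LeftBolAlgebra T)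

@[simp]
theorem Rmap_apply (u v w : T) : A.Rmap u v w = A.tri w u v :=
  rfl

theorem coadL_eq_dualMap_neg : A.coadL = fun x => (-A.mul x).dualMap :=
  funext fun _ => (LinearMap.dualMap_neg _).symm

theorem coadD_eq_dualMap_neg : A.coadD = fun x y => (-A.tri x y).dualMap :=
  funext₂ fun _ _ => (LinearMap.dualMap_neg _).symm

structure IsRepresentation {V : Type*} [AddCommGroup V] [Module ℝ V]
    (ρ : T → Module.End ℝ V) (θ D : T → T → Module.End ℝ V) : Prop where
  r1 : ∀ x y, D x y + θ x y - θ y x = 0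
  r21 : ∀ x y z, D x y * ρ z - ρ z * D x y =
    ρ (A.tri x y z) + ρ (A.mul x y) * ρ z - θ z (A.mul x y)
  r22 : ∀ x y z, θ x (A.mul y z) = ρ y * θ x z - ρ z * θ x y - (D y z - ρ (A.mul y z)) * ρ x
  r31 : ∀ u v x y, D u v * D x y - D x y * D u v = D (A.tri u v x) y + D x (A.tri u v y)
  r32 : ∀ u v x y, D u v * θ x y - θ x y * D u v = θ (A.tri u v x) y + θ x (A.tri u v y)
  r33 : ∀ u x y z, θ u (A.tri x y z) = θ y z * θ u x - θ x z * θ u y + D x y * θ u z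

theorem isRepresentation_adjoint :
    A.IsRepresentation (fun x => A.mul x) A.Rmap (fun x y => A.tri x y) where
  r1 x y := by
    ext w
    simp only [LinearMap.add_apply, LinearMap.sub_apply, Rmap_apply, LinearMap.zero_apply]
    linear_combination (norm := abel) A.tri_cyclic x y w - A.tri_skew y w x
  r21 x y z := by
    ext w
    simp only [LinearMap.add_apply, LinearMap.sub_apply, Module.End.mul_apply, Rmap_apply]
    linear_combination (norm := abel) A.bol x y z w + A.tri_skew z w (A.mul x y)
      - A.mul_anticomm (A.mul z w) (A.mul x y)
  r22 x y z := by
    ext w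
    simp only [LinearMap.sub_apply, Module.End.mul_apply, Rmap_apply]
    rw [A.mul_anticomm x w, map_neg, map_neg]
    linear_combination (norm := abel) A.bol w x y z + A.mul_anticomm (A.tri w x y) z
  r31 u v x y := by
    ext w
    simp only [LinearMap.add_apply, LinearMap.sub_apply, Module.End.mul_apply]
    linear_combination (norm := abel) A.tri_leibniz u v x y w
  r32 u v x y := by
    ext w
    simp only [LinearMap.add_apply, LinearMap.sub_apply, Module.End.mul_apply, Rmap_apply]
    linear_combination (norm := abel) A.tri_leibniz u v w x y
  r33 u x y z := by
    ext w
    simp only [LinearMap.add_apply, LinearMap.sub_apply, Module.End.mul_apply, Rmap_apply]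
    linear_combination (norm := abel) A.tri_leibniz w u x y z + A.tri_skew x (A.tri w u y) z

section Transpose

variable {A : LeftBolAlgebra T}

theorem IsRepresentation.dualMap_of_isAdjointPair {B : LinearMap.BilinForm ℝ T}
    (hB : B.SeparatingRight) {ρ ρ' : T → Module.End ℝ T} {θ θ' D D' : T → T → Module.End ℝ T}
    (h : A.IsRepresentation ρ θ D) (hρ : ∀ x, B.IsAdjointPair B (ρ x) (ρ' x))
    (hθ : ∀ x y, B.IsAdjointPair B (θ x y) (θ' x y))
    (hD : ∀ x y, B.IsAdjointPair B (D x y) (D' x y)) :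
    A.IsRepresentation (fun x => (ρ' x).dualMap) (fun x y => (θ' x y).dualMap)
      (fun x y => (D' x y).dualMap) where
  r1 x y := by
    simpa only [LinearMap.dualMap_add, LinearMap.dualMap_sub, LinearMap.dualMap_zero] using
      congrArg LinearMap.dualMap <|
        (((hD x y).add' (hθ x y)).sub' (hθ y x)).right_eq_of_left_eq (g' := 0) hB
          LinearMap.isAdjointPair_zero (h.r1 x y)
  r21 x y z := by
    simpa only [LinearMap.dualMap_add, LinearMap.dualMap_sub, LinearMap.dualMap_mul] using
      congrArg LinearMap.dualMap <|
        (((hD x y).mul (hρ z)).sub' ((hρ z).mul (hD x y))).right_eq_of_left_eq hB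
          (((hρ _).add' ((hρ _).mul (hρ z))).sub' (hθ z _)) (h.r21 x y z)
  r22 x y z := by
    simpa only [LinearMap.dualMap_add, LinearMap.dualMap_sub, LinearMap.dualMap_mul] using
      congrArg LinearMap.dualMap <|
        (hθ x _).right_eq_of_left_eq hB
          ((((hρ y).mul (hθ x z)).sub' ((hρ z).mul (hθ x y))).sub'
            (((hD y z).sub' (hρ _)).mul (hρ x))) (h.r22 x y z)
  r31 u v x y := by
    simpa only [LinearMap.dualMap_add, LinearMap.dualMap_sub, LinearMap.dualMap_mul] using
      congrArg LinearMap.dualMap <|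
        (((hD u v).mul (hD x y)).sub' ((hD x y).mul (hD u v))).right_eq_of_left_eq hB
          ((hD _ y).add' (hD x _)) (h.r31 u v x y)
  r32 u v x y := by
    simpa only [LinearMap.dualMap_add, LinearMap.dualMap_sub, LinearMap.dualMap_mul] using
      congrArg LinearMap.dualMap <|
        (((hD u v).mul (hθ x y)).sub' ((hθ x y).mul (hD u v))).right_eq_of_left_eq hB
          ((hθ _ y).add' (hθ x _)) (h.r32 u v x y)
  r33 u x y z := by
    simpa only [LinearMap.dualMap_add, LinearMap.dualMap_sub, LinearMap.dualMap_mul] using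
      congrArg LinearMap.dualMap <|
        (hθ u _).right_eq_of_left_eq hB
          ((((hθ y z).mul (hθ u x)).sub' ((hθ x z).mul (hθ u y))).add'
            ((hD x y).mul (hθ u z))) (h.r33 u x y z)

end Transpose

section Quadratic

variable {b : LinearMap.BilinForm ℝ T}

theorem isAdjointPair_mul (hassoc : ∀ x y z : T, b (A.mul x y) z = b x (A.mul y z)) (x : T) :
    b.IsAdjointPair b (A.mul x) ⇑(-A.mul x) := fun u s => by
  rw [A.mul_anticomm x u, map_neg, LinearMap.neg_apply, hassoc, LinearMap.neg_apply, map_neg]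

theorem isAdjointPair_tri (hsymm : ∀ x y : T, b x y = b y x)
    (hinv : ∀ x y z u : T, b (A.tri x y z) u = b (A.tri z u x) y) (x y : T) :
    b.IsAdjointPair b (A.tri x y) ⇑(-A.tri x y) := fun u s => by
  rw [LinearMap.neg_apply, map_neg, hinv x y u s, hsymm u, hinv x y s u, A.tri_skew s u x,
    map_neg, LinearMap.neg_apply, neg_neg]

theorem isAdjointPair_Rmap (hsymm : ∀ x y : T, b x y = b y x)
    (hinv : ∀ x y z u : T, b (A.tri x y z) u = b (A.tri z u x) y) (x y : T) :
    b.IsAdjointPair b (A.Rmap x y) (A.Rmap y x) := fun u s => by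
  rw [Rmap_apply, Rmap_apply, hsymm u, hinv s y x u, A.tri_skew x u s, map_neg,
    LinearMap.neg_apply, hinv u x s y, hinv u x y s, A.tri_skew s y u, map_neg,
    LinearMap.neg_apply, neg_neg]

end Quadratic

end LeftBolAlgebra

/-- Let (T,*,[[·,·,·]],b) be a quadratic left Bol algebra.  Then the triple
(l', R', L') on the dual space T*, given by l'(x)(f) = -f∘l(x), R'(x,y)(f) = f∘R(y,x),
L'(x,y)(f) = -f∘L(x,y), is a representation of T (the coadjoint representation),
i.e. it satisfies (R1), (R21), (R22), (R31), (R32), (R33). -/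
theorem coadjoint_representation
    (A : LeftBolAlgebra T) (b : LinearMap.BilinForm ℝ T)
    (hsymm : ∀ x y : T, b x y = b y x)
    (hnondeg : ∀ x : T, (∀ y : T, b x y = 0) → x = 0)
    (hassoc : ∀ x y z : T, b (A.mul x y) z = b x (A.mul y z))
    (hinv : ∀ x y z u : T, b (A.tri x y z) u = b (A.tri z u x) y) :
    (∀ x y : T, A.coadD x y + A.coadTheta x y - A.coadTheta y x = 0) ∧
    (∀ x y z : T, A.coadD x y * A.coadL z - A.coadL z * A.coadD x y =
      A.coadL (A.tri x y z) + A.coadL (A.mul x y) * A.coadL z -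
        A.coadTheta z (A.mul x y)) ∧
    (∀ x y z : T, A.coadTheta x (A.mul y z) =
      A.coadL y * A.coadTheta x z - A.coadL z * A.coadTheta x y -
        (A.coadD y z - A.coadL (A.mul y z)) * A.coadL x) ∧
    (∀ u v x y : T, A.coadD u v * A.coadD x y - A.coadD x y * A.coadD u v =
      A.coadD (A.tri u v x) y + A.coadD x (A.tri u v y)) ∧
    (∀ u v x y : T, A.coadD u v * A.coadTheta x y - A.coadTheta x y * A.coadD u v =
      A.coadTheta (A.tri u v x) y + A.coadTheta x (A.tri u v y)) ∧
    (∀ u x y z : T, A.coadTheta u (A.tri x y z) =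
      A.coadTheta y z * A.coadTheta u x - A.coadTheta x z * A.coadTheta u y +
        A.coadD x y * A.coadTheta u z) := by
  have hb : b.SeparatingRight := fun y hy => hnondeg y fun x => (hsymm y x).trans (hy x)
  have h : A.IsRepresentation A.coadL A.coadTheta A.coadD := by
    rw [A.coadL_eq_dualMap_neg, A.coadD_eq_dualMap_neg]
    exact A.isRepresentation_adjoint.dualMap_of_isAdjointPair hb (A.isAdjointPair_mul hassoc)
      (A.isAdjointPair_Rmap hsymm hinv) (A.isAdjointPair_tri hsymm hinv)
  exact ⟨h.r1, h.r21, h.r22, h.r31, h.r32, h.r33⟩
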